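/- Let d = m² − 1 for a positive integer m, and let F_{d+1} = F_m ⊗ F_m be the Fourier matrix of order d+1 (which factors as a Kronecker product when d+1 = m²), with Lagrange polynomials (ℓ_1(z); …; ℓ_{d+1}(z)) = (1/(d+1)) F_{d+1}^* (1; z). Then the degree-one Lebesgue constant on the complex torus satisfies Λ₁ = max_{z ∈ 𝕋^d} Σ_{j=1}^{d+1} |ℓ_j(z)| = √(d+1). -/

import Mathlib

/-!
Let `F = fourierMatrix n`. Orthogonality of the characters of `ℤ/n` gives `F Fᴴ = n • 1`, so for
`z` on the torus the vector `ℓ = n⁻¹ Fᴴ (1; z)` has Euclidean norm `1`, and Cauchy–Schwarz gives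
`∑ |ℓ_j| ≤ √n`. When `n = m²` the bound is attained: writing `k = m a + b` with `a, b < m`, the
unimodular vector with entries `ζ^{m a b}`, `ζ = exp(2πi/n)`, is mapped by `Fᴴ` to a vector whose
entries all have modulus `m`, since summing the `m`-th roots of unity `ζ^{m a (b - j - 1)}` over
`a` leaves only the single `b ≡ j + 1 (mod m)`.
-/

open Matrix

/-- The Fourier matrix `F_n = [ω^{jk}]_{1 ≤ j,k ≤ n}` of order `n`, where `ω = exp(2πi/n)`. -/
noncomputable def fourierMatrix (n : ℕ) : Matrix (Fin n) (Fin n) ℂ :=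
  Matrix.of fun j k : Fin n =>
    Complex.exp (2 * Real.pi * Complex.I * (((j : ℕ) : ℂ) + 1) * (((k : ℕ) : ℂ) + 1) / n)

/-- The values at `z ∈ ℂ^d` of the degree-one fundamental Lagrange polynomials associated to
the `d+1` points of the torus obtained by deleting the first column of the Fourier matrix
`F_{d+1}`:  `(ℓ_1(z); …; ℓ_{d+1}(z)) = (1/(d+1)) F_{d+1}^* (1; z)`. -/
noncomputable def torusLagrange (d : ℕ) (z : Fin d → ℂ) (i : Fin (d + 1)) : ℂ :=
  (((d : ℂ) + 1)⁻¹) * ((fourierMatrix (d + 1))ᴴ *ᵥ (Fin.cons 1 z : Fin (d + 1) → ℂ)) i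

open Complex Finset Real

theorem IsPrimitiveRoot.sum_zpow_mul {K : Type*} [Field K] {ζ : K} {n : ℕ}
    (hζ : IsPrimitiveRoot ζ n) (s : ℤ) :
    ∑ j : Fin n, ζ ^ (s * j) = if (n : ℤ) ∣ s then (n : K) else 0 := by
  have hpow : ∀ j : Fin n, ζ ^ (s * j) = (ζ ^ s) ^ (j : ℕ) := fun j => by
    rw [_root_.zpow_mul, zpow_natCast]
  simp_rw [hpow]
  rw [Fin.sum_univ_eq_sum_range (fun i => (ζ ^ s) ^ i)]
  split_ifs with hs
  · simp [(hζ.zpow_eq_one_iff_dvd s).2 hs]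
  · have hsn : (ζ ^ s) ^ n = 1 := by
      rw [← zpow_natCast, ← _root_.zpow_mul, mul_comm, _root_.zpow_mul, zpow_natCast,
        hζ.pow_eq_one, _root_.one_zpow]
    rw [geom_sum_eq ((hζ.zpow_eq_one_iff_dvd s).not.2 hs), hsn, sub_self, zero_div]

theorem Fin.natCast_dvd_sub_iff {m : ℕ} (b : Fin m) (c : ℕ) :
    (m : ℤ) ∣ (b : ℤ) - c ↔ (b : ℕ) = c % m := by
  rw [← Nat.modEq_iff_dvd, Nat.ModEq, Nat.mod_eq_of_lt b.isLt, eq_comm]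

theorem Matrix.star_dotProduct_self_eq_sum_norm_sq {ι : Type*} [Fintype ι] (w : ι → ℂ) :
    star w ⬝ᵥ w = ((∑ j, ‖w j‖ ^ 2 : ℝ) : ℂ) := by
  simp [dotProduct, Complex.conj_mul']

theorem Matrix.sum_norm_sq_conjTranspose_mulVec {κ ι : Type*} [Fintype κ] [Fintype ι]
    [DecidableEq κ] {A : Matrix κ ι ℂ} {c : ℝ} (hA : A * Aᴴ = (c : ℂ) • 1) (v : κ → ℂ) :
    ∑ j, ‖(Aᴴ *ᵥ v) j‖ ^ 2 = c * ∑ k, ‖v k‖ ^ 2 := by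
  have key : star (Aᴴ *ᵥ v) ⬝ᵥ (Aᴴ *ᵥ v) = c * (star v ⬝ᵥ v) := by
    rw [star_mulVec, conjTranspose_conjTranspose, dotProduct_mulVec, vecMul_vecMul, hA,
      vecMul_smul, vecMul_one, smul_dotProduct, smul_eq_mul]
  rw [star_dotProduct_self_eq_sum_norm_sq, star_dotProduct_self_eq_sum_norm_sq] at key
  exact_mod_cast key

section FourierMatrix

variable {n : ℕ}

theorem fourierMatrix_apply_eq_zpow (j k : Fin n) :
    fourierMatrix n j k = cexp (2 * π * I / n) ^ (((j : ℤ) + 1) * ((k : ℤ) + 1)) := by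
  have h : (((j : ℤ) + 1) * ((k : ℤ) + 1)) = ((((j : ℕ) + 1) * ((k : ℕ) + 1) : ℕ) : ℤ) := by
    push_cast; ring
  rw [fourierMatrix, of_apply, h, zpow_natCast, ← Complex.exp_nat_mul]
  congr 1
  push_cast
  ring

theorem conjTranspose_fourierMatrix_apply_eq_zpow (j k : Fin n) :
    (fourierMatrix n)ᴴ j k = cexp (2 * π * I / n) ^ (-(((j : ℤ) + 1) * ((k : ℤ) + 1))) := by
  have hζ := isPrimitiveRoot_exp n (Fin.pos j).ne'
  rw [conjTranspose_apply, fourierMatrix_apply_eq_zpow, star_zpow₀, _root_.zpow_neg,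
    ← _root_.inv_zpow, Complex.star_def, ← Complex.inv_eq_conj (hζ.norm'_eq_one (Fin.pos j).ne'),
    mul_comm ((k : ℤ) + 1)]

theorem fourierMatrix_mul_conjTranspose : fourierMatrix n * (fourierMatrix n)ᴴ = (n : ℂ) • 1 := by
  ext k k'
  set ζ := cexp (2 * π * I / n)
  have hζ : IsPrimitiveRoot ζ n := isPrimitiveRoot_exp n (Fin.pos k).ne'
  have hterm : ∀ j : Fin n, fourierMatrix n k j * (fourierMatrix n)ᴴ j k'
      = ζ ^ ((k : ℤ) - k') * ζ ^ (((k : ℤ) - k') * j) := fun j => by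
    rw [fourierMatrix_apply_eq_zpow, conjTranspose_fourierMatrix_apply_eq_zpow,
      ← zpow_add₀ (hζ.ne_zero (Fin.pos k).ne'), ← zpow_add₀ (hζ.ne_zero (Fin.pos k).ne')]
    congr 1
    ring
  rw [mul_apply, Matrix.smul_apply, one_apply, smul_eq_mul]
  simp_rw [hterm, ← mul_sum, hζ.sum_zpow_mul]
  by_cases hkk : k = k'
  · simp [hkk]
  · have : ¬ (n : ℤ) ∣ (k : ℤ) - k' := by
      rw [Fin.natCast_dvd_sub_iff, Nat.mod_eq_of_lt k'.isLt]
      exact fun h => hkk (Fin.ext h)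
    simp [hkk, this]

end FourierMatrix

section TorusLagrange

variable {d : ℕ}

theorem norm_torusLagrange (z : Fin d → ℂ) (j : Fin (d + 1)) :
    ‖torusLagrange d z j‖
      = ‖((fourierMatrix (d + 1))ᴴ *ᵥ (Fin.cons 1 z : Fin (d + 1) → ℂ)) j‖ / (d + 1) := by
  rw [torusLagrange, norm_mul, norm_inv, inv_mul_eq_div]
  norm_cast

theorem sum_norm_sq_torusLagrange {z : Fin d → ℂ} (hz : ∀ k, ‖z k‖ = 1) :
    ∑ j, ‖torusLagrange d z j‖ ^ 2 = 1 := by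
  have hv : ∀ k, ‖(Fin.cons 1 z : Fin (d + 1) → ℂ) k‖ = 1 := Fin.cases (by simp) hz
  have hF : fourierMatrix (d + 1) * (fourierMatrix (d + 1))ᴴ = (((d + 1 : ℕ) : ℝ) : ℂ) • 1 := by
    exact_mod_cast fourierMatrix_mul_conjTranspose
  simp_rw [norm_torusLagrange, div_pow, ← sum_div, sum_norm_sq_conjTranspose_mulVec hF, hv]
  simp only [Nat.cast_add, Nat.cast_one, one_pow, sum_const, card_univ, Fintype.card_fin,
    nsmul_eq_mul, mul_one]
  field_simp

theorem sum_norm_torusLagrange_le {z : Fin d → ℂ} (hz : ∀ k, ‖z k‖ = 1) :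
    ∑ j, ‖torusLagrange d z j‖ ≤ √((d : ℝ) + 1) := by
  apply Real.le_sqrt_of_sq_le
  calc (∑ j, ‖torusLagrange d z j‖) ^ 2
      ≤ #(univ : Finset (Fin (d + 1))) * ∑ j, ‖torusLagrange d z j‖ ^ 2 :=
        sq_sum_le_card_mul_sum_sq
    _ = d + 1 := by simp [sum_norm_sq_torusLagrange hz]

end TorusLagrange

noncomputable def bilinearPhase (n m : ℕ) (k : Fin n) : ℂ :=
  cexp (2 * π * I / n) ^ (m * ((k : ℕ) / m) * ((k : ℕ) % m))

theorem norm_bilinearPhase (n m : ℕ) (k : Fin n) : ‖bilinearPhase n m k‖ = 1 := by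
  rw [bilinearPhase, norm_pow,
    (isPrimitiveRoot_exp n (Fin.pos k).ne').norm'_eq_one (Fin.pos k).ne', one_pow]

theorem bilinearPhase_zero (n m : ℕ) [NeZero n] : bilinearPhase n m 0 = 1 := by
  simp [bilinearPhase]

theorem norm_conjTranspose_fourierMatrix_mulVec_bilinearPhase {n m : ℕ} (hn : n = m * m)
    (j : Fin n) : ‖((fourierMatrix n)ᴴ *ᵥ bilinearPhase n m) j‖ = m := by
  subst hn
  have hm : 0 < m := Nat.pos_of_ne_zero fun h => by subst h; exact Fin.elim0 j
  set ζ := cexp (2 * π * I / (m * m : ℕ))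
  have hζ : IsPrimitiveRoot ζ (m * m) := isPrimitiveRoot_exp _ (by positivity)
  have hζ0 : ζ ≠ 0 := hζ.ne_zero (by positivity)
  have hη : IsPrimitiveRoot (ζ ^ m) m := hζ.pow (by positivity) rfl
  have hterm : ∀ a b : Fin m,
      (fourierMatrix (m * m))ᴴ j (finProdFinEquiv (a, b))
          * bilinearPhase (m * m) m (finProdFinEquiv (a, b))
        = ζ ^ (-((j : ℤ) + 1) * ((b : ℤ) + 1))
          * (ζ ^ m) ^ (((b : ℤ) - (((j : ℕ) + 1 : ℕ) : ℤ)) * a) := fun a b => by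
    rw [conjTranspose_fourierMatrix_apply_eq_zpow, bilinearPhase, finProdFinEquiv_apply_val,
      Nat.add_mul_div_left _ _ hm, Nat.div_eq_of_lt b.isLt, zero_add, Nat.add_mul_mod_self_left,
      Nat.mod_eq_of_lt b.isLt, ← zpow_natCast, ← zpow_natCast, ← _root_.zpow_mul,
      ← zpow_add₀ hζ0, ← zpow_add₀ hζ0]
    congr 1
    push_cast
    ring
  set b₀ : Fin m := ⟨((j : ℕ) + 1) % m, Nat.mod_lt _ hm⟩
  calc ‖((fourierMatrix (m * m))ᴴ *ᵥ bilinearPhase (m * m) m) j‖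
      = ‖∑ b : Fin m, ζ ^ (-((j : ℤ) + 1) * ((b : ℤ) + 1))
          * ∑ a : Fin m, (ζ ^ m) ^ (((b : ℤ) - (((j : ℕ) + 1 : ℕ) : ℤ)) * a)‖ := by
        rw [mulVec, dotProduct, ← finProdFinEquiv.sum_comp, Fintype.sum_prod_type, sum_comm]
        simp_rw [hterm, mul_sum]
    _ = ‖ζ ^ (-((j : ℤ) + 1) * ((b₀ : ℤ) + 1)) * m‖ := by
        simp_rw [hη.sum_zpow_mul, Fin.natCast_dvd_sub_iff]
        rw [sum_eq_single_of_mem b₀ (mem_univ _) fun b _ hb => by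
          rw [if_neg fun h => hb (Fin.ext h), mul_zero], if_pos rfl]
    _ = m := by
        rw [norm_mul, norm_zpow, hζ.norm'_eq_one (by positivity), _root_.one_zpow, one_mul,
          Complex.norm_natCast]

theorem sum_norm_torusLagrange_tail_bilinearPhase {d m : ℕ} (hd : d + 1 = m * m) :
    ∑ j, ‖torusLagrange d (Fin.tail (bilinearPhase (d + 1) m)) j‖ = √((d : ℝ) + 1) := by
  have hcons : (Fin.cons 1 (Fin.tail (bilinearPhase (d + 1) m)) : Fin (d + 1) → ℂ)
      = bilinearPhase (d + 1) m := by
    rw [← bilinearPhase_zero (d + 1) m, Fin.cons_self_tail]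
  have hsqrt : √((d : ℝ) + 1) = m := by
    rw [show (d : ℝ) + 1 = m * m by exact_mod_cast hd, Real.sqrt_mul_self m.cast_nonneg]
  simp_rw [norm_torusLagrange, hcons, norm_conjTranspose_fourierMatrix_mulVec_bilinearPhase hd,
    sum_const, card_univ, Fintype.card_fin, nsmul_eq_mul, hsqrt]
  push_cast
  field_simp

theorem fourier_lebesgue_eq_general (m d : ℕ) (hd : d + 1 = m * m) :
    IsGreatest {t : ℝ | ∃ z : Fin d → ℂ, (∀ k, ‖z k‖ = 1) ∧
        t = ∑ j : Fin (d + 1), ‖torusLagrange d z j‖}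
      (Real.sqrt ((d : ℝ) + 1)) :=
  ⟨⟨_, fun k => norm_bilinearPhase _ _ k.succ,
      (sum_norm_torusLagrange_tail_bilinearPhase hd).symm⟩,
    by rintro t ⟨z, hz, rfl⟩; exact sum_norm_torusLagrange_le hz⟩

/-- for `d = m² - 1` with `m` a positive integer (so that the Fourier matrix
`F_{d+1}` factors as the Kronecker product `F_m ⊗ F_m`), the degree-one Lebesgue constant
for the Fourier points on the complex torus satisfies
`Λ₁ = max_{z ∈ 𝕋^d} ∑ⱼ |ℓⱼ(z)| = √(d+1)`. -/
theorem fourier_lebesgue_eq (m d : ℕ) (hm : 0 < m) (hd : d + 1 = m * m) :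
    IsGreatest {t : ℝ | ∃ z : Fin d → ℂ, (∀ k, ‖z k‖ = 1) ∧
        t = ∑ j : Fin (d + 1), ‖torusLagrange d z j‖}
      (Real.sqrt ((d : ℝ) + 1)) :=
  fourier_lebesgue_eq_general m d hd
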